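/- Let N be a positive natural number (the number of agents), S a nonempty finite type (the state space), and A a nonempty finite type (each agent's action space). For each agent i : Fin N let π_i : ℝ → S → A → ℝ be a parametrized policy such that for every θ and every state s, ∑_{a ∈ A} π_i θ s a = 1, the map θ ↦ π_i θ s a is differentiable at θ₀ for every s and a, and π_i θ₀ s a > 0 for all s, a. Let d : S → ℝ be arbitrary nonnegative state weights, and for each agent i let B_i : S → (Fin N → A) → ℝ be a baseline that does not depend on agent i's own action, i.e. B_i s a = B_i s a' whenever a j = a' j for all j ≠ i. Then the total baseline contribution to the joint policy gradient vanishes: ∑_{s ∈ S} d s * ∑_{i : Fin N} ∑_{a : Fin N → A} (∏_{j : Fin N} π_j θ₀ s (a j)) * deriv (fun θ => Real.log (π_i θ s (a i))) θ₀ * B_i s a = 0. -/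

import Mathlib

theorem multiagent_baseline_unbiased
    (N : ℕ) (hN : 0 < N)
    (S : Type*) [Fintype S] [Nonempty S]
    (A : Type*) [Fintype A] [Nonempty A]
    (π : Fin N → ℝ → S → A → ℝ) (θ₀ : ℝ)
    (hnorm : ∀ i θ s, ∑ a, π i θ s a = 1)
    (hdiff : ∀ i s a, DifferentiableAt ℝ (fun θ => π i θ s a) θ₀)
    (hpos : ∀ i s a, 0 < π i θ₀ s a)
    (d : S → ℝ) (hd : ∀ s, 0 ≤ d s)
    (B : Fin N → S → (Fin N → A) → ℝ)
    (hB : ∀ i s (a a' : Fin N → A), (∀ j, j ≠ i → a j = a' j) → B i s a = B i s a') :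
    ∑ s, d s * ∑ i, ∑ a : Fin N → A,
      (∏ j, π j θ₀ s (a j)) * deriv (fun θ => Real.log (π i θ s (a i))) θ₀ * B i s a = 0 := by
  have key : ∀ i s, ∑ a : Fin N → A,
      (∏ j, π j θ₀ s (a j)) * deriv (fun θ => Real.log (π i θ s (a i))) θ₀ * B i s a = 0 := by
    intro i s
    classical
    -- derivative of log
    have hdl : ∀ x : A, deriv (fun θ => Real.log (π i θ s x)) θ₀
        = deriv (fun θ => π i θ s x) θ₀ / π i θ₀ s x := fun x =>
      (((hdiff i s x).hasDerivAt).log (ne_of_gt (hpos i s x))).deriv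
    -- sum of derivatives vanishes
    have hds : ∑ x : A, deriv (fun θ => π i θ s x) θ₀ = 0 := by
      have h1 : deriv (fun θ => ∑ x : A, π i θ s x) θ₀
          = ∑ x : A, deriv (fun θ => π i θ s x) θ₀ :=
        deriv_fun_sum (fun x _ => hdiff i s x)
      have h2 : (fun θ => ∑ x : A, π i θ s x) = fun _ => (1 : ℝ) := by
        funext θ; exact hnorm i θ s
      rw [h2, deriv_const] at h1
      exact h1.symm
    set e := Equiv.piSplitAt i (fun _ : Fin N => A) with he
    rw [← e.symm.sum_comp, Fintype.sum_prod_type]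
    have hx : ∀ p : A × ({j : Fin N // j ≠ i} → A), e.symm p i = p.1 := by
      intro p; simp [he, Equiv.piSplitAt_symm_apply]
    have hj : ∀ (p : A × ({j : Fin N // j ≠ i} → A)) (j : Fin N) (h : j ≠ i),
        e.symm p j = p.2 ⟨j, h⟩ := by
      intro p j h; simp [he, Equiv.piSplitAt_symm_apply, h]
    set x₀ : A := Classical.arbitrary A
    have hterm : ∀ (x : A) (g : {j : Fin N // j ≠ i} → A),
        (∏ j, π j θ₀ s (e.symm (x, g) j)) *
          deriv (fun θ => Real.log (π i θ s (e.symm (x, g) i))) θ₀ *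
          B i s (e.symm (x, g))
        = deriv (fun θ => π i θ s x) θ₀ *
          ((∏ j ∈ ({i}ᶜ : Finset (Fin N)), π j θ₀ s (e.symm (x₀, g) j)) *
            B i s (e.symm (x₀, g))) := by
      intro x g
      have hBeq : B i s (e.symm (x, g)) = B i s (e.symm (x₀, g)) := by
        apply hB; intro j hji; rw [hj _ _ hji, hj _ _ hji]
      have hprod : ∏ j ∈ ({i}ᶜ : Finset (Fin N)), π j θ₀ s (e.symm (x, g) j)
          = ∏ j ∈ ({i}ᶜ : Finset (Fin N)), π j θ₀ s (e.symm (x₀, g) j) := by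
        apply Finset.prod_congr rfl
        intro j hji
        rw [Finset.mem_compl, Finset.mem_singleton] at hji
        rw [hj _ _ hji, hj _ _ hji]
      rw [Fintype.prod_eq_mul_prod_compl i, hx, hdl, hBeq, hprod]
      have hne : π i θ₀ s x ≠ 0 := ne_of_gt (hpos i s x)
      field_simp
    calc ∑ x : A, ∑ g : {j : Fin N // j ≠ i} → A,
          (∏ j, π j θ₀ s (e.symm (x, g) j)) *
            deriv (fun θ => Real.log (π i θ s (e.symm (x, g) i))) θ₀ *
            B i s (e.symm (x, g))
        = ∑ x : A, deriv (fun θ => π i θ s x) θ₀ *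
            ∑ g : {j : Fin N // j ≠ i} → A,
              ((∏ j ∈ ({i}ᶜ : Finset (Fin N)), π j θ₀ s (e.symm (x₀, g) j)) *
                B i s (e.symm (x₀, g))) := by
          refine Finset.sum_congr rfl fun x _ => ?_
          rw [Finset.mul_sum]
          exact Finset.sum_congr rfl fun g _ => hterm x g
      _ = (∑ x : A, deriv (fun θ => π i θ s x) θ₀) *
            ∑ g : {j : Fin N // j ≠ i} → A,
              ((∏ j ∈ ({i}ᶜ : Finset (Fin N)), π j θ₀ s (e.symm (x₀, g) j)) *
                B i s (e.symm (x₀, g))) := by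
          rw [Finset.sum_mul]
      _ = 0 := by rw [hds, zero_mul]
  simp only [key]
  simp
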